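/- For all positive integers n and q, in the (q:1) Waiter-Client game on E(K_n) Waiter has a strategy to ensure that at the end of the game Client's graph contains a connected component with at least min{n, 2(n−q−1)} vertices. -/

import Mathlib

open SimpleGraph

/-- In the Waiter-Client game with bias `q`, set of free elements `F` and set `C` of elements
claimed so far by Client, Client has a strategy to ensure that the final set of elements
claimed by him satisfies `P`.  In every round Waiter offers `q + 1` free elements, Client
claims one of them and the remaining `q` go to Waiter; when fewer than `q + 1` free elements
remain, Waiter claims all of them and the game ends. -/
def ClientCanEnsure {α : Type*} [DecidableEq α] (q : ℕ) (P : Finset α → Prop)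
    (F C : Finset α) : Prop :=
  if F.card < q + 1 then P C
  else ∀ O ⊆ F, O.card = q + 1 → ∃ x ∈ O, ClientCanEnsure q P (F \ O) (insert x C)
  termination_by F.card
  decreasing_by
    have h1 : O.Nonempty := by rw [← Finset.card_pos]; omega
    have h2 := Finset.card_sdiff_add_card_eq_card ‹O ⊆ F›
    have h3 := Finset.card_le_card ‹O ⊆ F›
    have h4 := Finset.card_pos.mpr h1
    omega

/-- In the Waiter-Client game with bias `q`, set of free elements `F` and set `C` of elements
claimed so far by Client, Waiter has a strategy to ensure that the final set of elements
claimed by Client satisfies `P`.  In every round Waiter offers `q + 1` free elements, Client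
claims one of them and the remaining `q` go to Waiter; when fewer than `q + 1` free elements
remain, Waiter claims all of them and the game ends.  (The hypothesis `O ⊆ F` guarding the
recursive call is redundant; it is only there to justify termination.) -/
def WaiterCanForce {α : Type*} [DecidableEq α] (q : ℕ) (P : Finset α → Prop)
    (F C : Finset α) : Prop :=
  if F.card < q + 1 then P C
  else ∃ O ⊆ F, O.card = q + 1 ∧
    ∀ x ∈ O, O ⊆ F → WaiterCanForce q P (F \ O) (insert x C)
  termination_by F.card
  decreasing_by
    have h1 : O.Nonempty := ⟨x, ‹x ∈ O›⟩
    have h2 := Finset.card_sdiff_add_card_eq_card ‹O ⊆ F›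
    have h3 := Finset.card_le_card ‹O ⊆ F›
    have h4 := Finset.card_pos.mpr h1
    omega

/-- Client's graph: the simple graph on `V` whose edges are the elements claimed by Client. -/
def clientGraph {V : Type*} (C : Finset (Sym2 V)) : SimpleGraph V :=
  SimpleGraph.fromEdgeSet ↑C

/-- The board of the game played on `E(K_n)`: all non-loop edges of the complete graph `K_n`. -/
def knBoard (n : ℕ) : Finset (Sym2 (Fin n)) :=
  Finset.univ.filter fun e => ¬ e.IsDiag


/-!
Waiter keeps a set `A` that is connected in Client's graph and offers only edges between `A`
and its complement, so every round adds the outer end of Client's edge to `A`, while the edges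
outside `A` stay free. Only the multiset of the numbers of free edges from the outside vertices
into `A` matters.

With `n = m + q + 1`, Waiter spends the first `min q m` rounds offering all edges at the vertices
with a single free edge into `A` together with the edges at one untouched vertex. If `m ≤ q`, he
goes on offering the vertices of free degree one together with a vertex of largest free degree;
these supply exactly `q + 1` edges per round until `A` has `2m` vertices. If `q < m`, every
remaining vertex gains a free edge whenever a vertex of larger free degree is absorbed, which
lets Waiter offer `q + 1` edges at a vertex of maximal free degree until `A` is everything.
-/

section WaiterCanForce

variable {α : Type*} [DecidableEq α] {q : ℕ}

theorem waiterCanForce_of_offer {P : Finset α → Prop} {F C O : Finset α} (hOF : O ⊆ F)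
    (hO : O.card = q + 1) (h : ∀ x ∈ O, WaiterCanForce q P (F \ O) (insert x C)) :
    WaiterCanForce q P F C := by
  rw [WaiterCanForce, if_neg (by have := Finset.card_le_card hOF; omega)]
  exact ⟨O, hOF, hO, fun x hx _ => h x hx⟩

theorem waiterCanForce_of_forall_superset {P : Finset α → Prop} (F C : Finset α)
    (h : ∀ C', C ⊆ C' → P C') : WaiterCanForce q P F C := by
  induction hk : F.card using Nat.strong_induction_on generalizing F C with
  | _ k ih =>
    rw [WaiterCanForce]
    split_ifs with hF
    · exact h C subset_rfl
    · obtain ⟨O, hOF, hO⟩ := Finset.exists_subset_card_eq (show q + 1 ≤ F.card by omega)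
      refine ⟨O, hOF, hO, fun x _ _ => ih _ ?_ _ _ (fun C' hC' => h C' ?_) rfl⟩
      · have := Finset.card_sdiff_add_card_eq_card hOF
        omega
      · exact (Finset.subset_insert x C).trans hC'

theorem WaiterCanForce.mono {P Q : Finset α → Prop} (hPQ : ∀ C, P C → Q C) {F C : Finset α}
    (h : WaiterCanForce q P F C) : WaiterCanForce q Q F C := by
  induction hk : F.card using Nat.strong_induction_on generalizing F C with
  | _ k ih =>
    rw [WaiterCanForce] at h ⊢
    split_ifs at h ⊢ with hF
    · exact hPQ C h
    · obtain ⟨O, hOF, hO, hnext⟩ := h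
      refine ⟨O, hOF, hO, fun x hx hOF' => ih _ ?_ (hnext x hx hOF') rfl⟩
      have := Finset.card_sdiff_add_card_eq_card hOF
      have := Finset.card_pos.2 ⟨x, hx⟩
      omega

end WaiterCanForce

/-- Abstract positions of Waiter's strategy: Client's growing component has `s` vertices and
`D` is the multiset of the numbers of free edges from the outside vertices into it.
`CanGrow q t s D` says that Waiter can grow the component to `t` vertices by rounds of two
kinds: `offerAll` offers every free edge into the component at a set of outside vertices whose
free degrees `T` sum to `q + 1`; `offerOne` offers `q + 1` of the free edges at one outside
vertex. The outside vertex Client connects joins the component; after `offerAll` the other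
vertices of `T` are left with a single free edge (to the new vertex), and every vertex not
offered at gains one. -/
inductive CanGrow (q t : ℕ) : ℕ → Multiset ℕ → Prop
  | done {s : ℕ} {D : Multiset ℕ} : t ≤ s → CanGrow q t s D
  | offerAll {s : ℕ} (T R : Multiset ℕ) : T.sum = q + 1 →
      CanGrow q t (s + 1) (R.map (· + 1) + Multiset.replicate (Multiset.card T - 1) 1) →
      CanGrow q t s (T + R)
  | offerOne {s : ℕ} (d : ℕ) (R : Multiset ℕ) : q + 1 ≤ d →
      CanGrow q t (s + 1) (R.map (· + 1)) → CanGrow q t s (d ::ₘ R)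

namespace Multiset

theorem Ico_add_one_right_eq_cons {a b : ℕ} (h : a ≤ b) : Ico a (b + 1) = b ::ₘ Ico a b :=
  nodup_Ico.ext (nodup_cons.2 ⟨right_notMem_Ico, nodup_Ico⟩) |>.2 fun x => by
    simp only [mem_Ico, mem_cons]
    omega

theorem cons_Ico_add_one_left {a b : ℕ} (h : a < b) : a ::ₘ Ico (a + 1) b = Ico a b :=
  (nodup_cons.2 ⟨by simp, nodup_Ico⟩).ext nodup_Ico |>.2 fun x => by
    simp only [mem_Ico, mem_cons]
    omega

end Multiset

open Multiset

theorem Nat.card_multiset_Ico (a b : ℕ) : card (Ico a b) = b - a := Nat.card_Ico a b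

namespace CanGrow

variable {q t : ℕ}

/-- Waiter always offers edges at an outside vertex of maximal free degree. -/
theorem of_greedy {s : ℕ} {D : Multiset ℕ} (ht : t ≤ s + card D)
    (hD : ∀ d ∈ D, q + 1 ≤ d + card (D.filter (d < ·))) : CanGrow q t s D := by
  induction hk : card D generalizing s D with
  | zero => exact .done (by omega)
  | succ k ih =>
    have hne : D.toFinset.Nonempty := by
      rw [toFinset_nonempty, ← card_pos]
      omega
    obtain ⟨d, hdD, hmax⟩ := D.toFinset.exists_max_image id hne
    rw [mem_toFinset] at hdD
    obtain ⟨R, rfl⟩ := exists_cons_of_mem hdD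
    have hnone : (d ::ₘ R).filter (d < ·) = 0 :=
      filter_eq_nil.2 fun x hx => not_lt.2 (hmax x (mem_toFinset.2 hx))
    refine .offerOne d R (by simpa [hnone] using hD d hdD) (ih ?_ ?_ (by simp_all))
    · simp only [card_cons, card_map] at ht ⊢
      omega
    · intro y hy
      obtain ⟨x, hxR, rfl⟩ := mem_map.1 hy
      have hx := hD x (mem_cons_of_mem hxR)
      -- `x` gains one, and loses at most `d` from the elements above it
      rw [filter_map, card_map]
      rw [filter_cons] at hx
      split_ifs at hx <;> simp only [Function.comp_def, add_lt_add_iff_right, card_add,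
        card_singleton, zero_add] at hx ⊢ <;> omega

end CanGrow

/-- The free-degree profile after `r - 1` opening rounds on `n = m + q + 1` vertices: outside
the `r` vertices of the component there are `q + 1 - r` vertices with one free edge into it, one
vertex each with `1, …, r - 1` free edges, and `m + 1 - r` untouched vertices, with `r` each. -/
def openingProfile (q m r : ℕ) : Multiset ℕ :=
  replicate (q + 1 - r) 1 + Ico 1 r + replicate (m + 1 - r) r

namespace CanGrow

variable {q t m : ℕ}

/-- One opening round offers the `q + 1 - r` edges at the vertices of free degree one together
with the `r` edges at one untouched vertex. -/
theorem openingProfile_step {r : ℕ} (hr : 1 ≤ r) (hrq : r ≤ q) (hrm : r ≤ m)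
    (h : CanGrow q t (r + 1) (openingProfile q m (r + 1))) :
    CanGrow q t r (openingProfile q m r) := by
  have hsplit : openingProfile q m r
      = (replicate (q + 1 - r) 1 + {r}) + (Ico 1 r + replicate (m - r) r) := by
    rw [openingProfile, show m + 1 - r = m - r + 1 by omega, replicate_succ,
      ← singleton_add]
    ac_rfl
  rw [hsplit]
  refine .offerAll _ _ (by simp; omega) ?_
  convert h using 1
  rw [openingProfile, Multiset.map_add, map_add_right_Ico, map_replicate, card_add, card_replicate,
    card_singleton, Nat.add_sub_cancel, show q + 1 - r = q - r + 1 by omega,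
    show m + 1 - (r + 1) = m - r by omega, show q + 1 - (r + 1) = q - r by omega,
    replicate_succ, ← cons_Ico_add_one_left (by omega : 1 < r + 1)]
  simp only [cons_add, add_cons]
  ac_rfl

theorem of_openingProfile {r : ℕ} (hr : 1 ≤ r) (hrq : r ≤ q + 1) (hrm : r ≤ m + 1)
    (h : CanGrow q t r (openingProfile q m r)) : CanGrow q t 1 (openingProfile q m 1) := by
  induction r, hr using Nat.le_induction with
  | base => exact h
  | succ r hr ih => exact ih (by omega) (by omega) (openingProfile_step hr (by omega) (by omega) h)

/-- When `m ≤ q`, each round offers the edges at all vertices of free degree one together with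
the `m` edges at the vertex of largest free degree. -/
theorem openingProfile_of_le (hm : 1 ≤ m) (hmq : m ≤ q) (ht : t ≤ 2 * m) :
    CanGrow q t (m + 1) (openingProfile q m (m + 1)) := by
  have key : ∀ k, k < m →
      CanGrow q t (2 * m - k) (replicate (q + 1 - m) 1 + Ico (m + 1 - k) (m + 1)) := by
    intro k
    induction k with
    | zero => exact fun _ => .done (by omega)
    | succ k ih =>
      intro hk
      rw [Ico_add_one_right_eq_cons (by omega), ← singleton_add, ← add_assoc]
      refine .offerAll _ _ (by simp; omega) ?_
      convert ih (by omega) using 1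
      · omega
      · rw [map_add_right_Ico, card_add, card_replicate, card_singleton, Nat.add_sub_cancel,
          add_comm, show m + 1 - (k + 1) + 1 = m + 1 - k by omega]
  convert key (m - 1) (by omega) using 1
  · omega
  · rw [openingProfile, Nat.sub_self, replicate_zero, add_zero,
      show m + 1 - (m - 1) = 1 + 1 by omega, ← cons_Ico_add_one_left (by omega : 1 < m + 1),
      show q + 1 - (m + 1) = q - m by omega, show q + 1 - m = q - m + 1 by omega,
      replicate_succ, cons_add, add_cons]

theorem openingProfile_of_lt (hqm : q < m) (ht : t ≤ m + q + 1) :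
    CanGrow q t (q + 1) (openingProfile q m (q + 1)) := by
  rw [openingProfile, Nat.sub_self, replicate_zero, zero_add]
  refine of_greedy (by simp [Nat.card_multiset_Ico]; omega) fun d hd => ?_
  rcases mem_add.1 hd with hd | hd
  · have hfilter : ((Ico 1 (q + 1)).filter (d < ·)) = Ico (d + 1) (q + 1) :=
      (nodup_Ico.filter _).ext nodup_Ico |>.2 fun x => by
        simp only [mem_filter, mem_Ico]
        omega
    rw [mem_Ico] at hd
    rw [filter_add, hfilter, filter_eq_self.2 fun x hx => by rw [eq_of_mem_replicate hx]; omega]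
    simp [Nat.card_multiset_Ico]
    omega
  · rw [eq_of_mem_replicate hd]
    omega

theorem initial (hm : 1 ≤ m) (ht : t ≤ min (m + q + 1) (2 * m)) :
    CanGrow q t 1 (replicate (q + m) 1) := by
  have hstart : openingProfile q m 1 = replicate (q + m) 1 := by
    rw [openingProfile, Ico_self, add_zero, Nat.add_sub_cancel, Nat.add_sub_cancel,
      replicate_add]
  rw [← hstart]
  rcases le_or_gt m q with hmq | hqm
  · exact of_openingProfile le_add_self (by omega) le_rfl
      (openingProfile_of_le hm hmq (ht.trans (min_le_right _ _)))
  · exact of_openingProfile le_add_self le_rfl (by omega)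
      (openingProfile_of_lt hqm (ht.trans (min_le_left _ _)))

end CanGrow

theorem Multiset.exists_eq_add_of_map_eq_add {α β : Type*} {f : α → β} {T R : Multiset β} :
    ∀ {s : Multiset α}, s.map f = T + R → ∃ u w, s = u + w ∧ u.map f = T ∧ w.map f = R := by
  classical
  induction T using Multiset.induction with
  | empty => exact fun {s} h => ⟨0, s, by simp, by simp, by simpa using h⟩
  | cons b T ih =>
    intro s h
    obtain ⟨a, ha, rfl, h'⟩ := (map_eq_cons f s _ b).2 (by rw [h, cons_add])
    obtain ⟨u, w, hs, rfl, rfl⟩ := ih h'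
    refine ⟨a ::ₘ u, w, ?_, map_cons f a u, rfl⟩
    rw [cons_add, ← hs, cons_erase ha]

section Realization

variable {V : Type*}

theorem clientGraph_mono {C C' : Finset (Sym2 V)} (h : C ⊆ C') :
    clientGraph C ≤ clientGraph C' :=
  SimpleGraph.fromEdgeSet_mono (Finset.coe_subset.2 h)

structure IsCore (F C : Finset (Sym2 V)) (A : Finset V) (v : V) : Prop where
  mem : v ∈ A
  reachable : ∀ a ∈ A, (clientGraph C).Reachable v a
  free : ∀ u w, u ∉ A → w ∉ A → u ≠ w → s(u, w) ∈ F

theorem IsCore.card_le_ncard_supp [Finite V] {F C : Finset (Sym2 V)} {A : Finset V} {v : V}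
    (h : IsCore F C A v) {C' : Finset (Sym2 V)} (hC : C ⊆ C') :
    A.card ≤ ((clientGraph C').connectedComponentMk v).supp.ncard := by
  rw [← Set.ncard_coe_finset]
  refine Set.ncard_le_ncard (fun b hb => ?_) (Set.toFinite _)
  rw [SimpleGraph.ConnectedComponent.mem_supp_iff, SimpleGraph.ConnectedComponent.eq]
  exact ((h.reachable b hb).mono (clientGraph_mono hC)).symm

variable [DecidableEq V]

theorem clientGraph_insert_adj (C : Finset (Sym2 V)) {u w : V} (h : u ≠ w) :
    (clientGraph (insert s(u, w) C)).Adj u w := by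
  simp [clientGraph, h]

def freeNbrs (F : Finset (Sym2 V)) (A : Finset V) (u : V) : Finset V :=
  A.filter fun a => s(u, a) ∈ F

namespace IsCore

variable {F C O : Finset (Sym2 V)} {A : Finset V} {v u a : V}

theorem absorb (h : IsCore F C A v) (hO : ∀ u w, u ∉ A → w ∉ A → s(u, w) ∉ O) (hu : u ∉ A)
    (ha : a ∈ A) : IsCore (F \ O) (insert s(u, a) C) (insert u A) v where
  mem := Finset.mem_insert_of_mem h.mem
  reachable b hb := by
    have hmono := clientGraph_mono (Finset.subset_insert s(u, a) C)
    rcases Finset.mem_insert.1 hb with rfl | hb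
    · exact ((h.reachable a ha).mono hmono).trans
        (clientGraph_insert_adj C (ne_of_mem_of_not_mem ha hu).symm).symm.reachable
    · exact (h.reachable b hb).mono hmono
  free w w' hw hw' hne := by
    simp only [Finset.mem_insert, not_or] at hw hw'
    exact Finset.mem_sdiff.2 ⟨h.free w w' hw.2 hw'.2 hne, hO w w' hw.2 hw'.2⟩

theorem card_freeNbrs_insert (h : IsCore F C A v) (hO : ∀ u w, u ∉ A → w ∉ A → s(u, w) ∉ O)
    (hu : u ∉ A) {w : V} (hw : w ∉ insert u A) :
    (freeNbrs (F \ O) (insert u A) w).card = (freeNbrs (F \ O) A w).card + 1 := by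
  simp only [Finset.mem_insert, not_or] at hw
  rw [freeNbrs, Finset.filter_insert,
    if_pos (Finset.mem_sdiff.2 ⟨h.free w u hw.2 hu hw.1, hO w u hw.2 hu⟩),
    Finset.card_insert_of_notMem fun hu' => hu (Finset.mem_filter.1 hu').1]
  rfl

end IsCore

def offer (U : Finset V) (N : V → Finset V) : Finset (Sym2 V) :=
  U.biUnion fun u => (N u).image fun a => s(u, a)

section Offer

variable {F : Finset (Sym2 V)} {A U : Finset V} {N : V → Finset V} {u w a : V}

theorem mem_offer {x : Sym2 V} : x ∈ offer U N ↔ ∃ u ∈ U, ∃ a ∈ N u, s(u, a) = x := by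
  simp [offer]

theorem mk_mem_offer_iff (hN : ∀ u ∈ U, N u ⊆ A) (hw : w ∉ A) :
    s(w, a) ∈ offer U N ↔ w ∈ U ∧ a ∈ N w := by
  rw [mem_offer]
  constructor
  · rintro ⟨u, hu, b, hb, he⟩
    rcases Sym2.eq_iff.1 he with ⟨rfl, rfl⟩ | ⟨rfl, rfl⟩
    · exact ⟨hu, hb⟩
    · exact absurd (hN u hu hb) hw
  · rintro ⟨hwU, ha⟩
    exact ⟨w, hwU, a, ha, rfl⟩

theorem mk_notMem_offer (hN : ∀ u ∈ U, N u ⊆ A) (hu : u ∉ A) (hw : w ∉ A) :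
    s(u, w) ∉ offer U N := by
  rw [mk_mem_offer_iff hN hu]
  exact fun h => hw (hN u h.1 h.2)

theorem offer_subset (hN : ∀ u ∈ U, N u ⊆ freeNbrs F A u) : offer U N ⊆ F := by
  intro x hx
  obtain ⟨u, hu, a, ha, rfl⟩ := mem_offer.1 hx
  exact (Finset.mem_filter.1 (hN u hu ha)).2

theorem card_offer (hU : ∀ u ∈ U, u ∉ A) (hN : ∀ u ∈ U, N u ⊆ A) :
    (offer U N).card = ∑ u ∈ U, (N u).card := by
  rw [offer, Finset.card_biUnion]
  · exact Finset.sum_congr rfl fun u _ =>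
      Finset.card_image_of_injective _ fun a b h => Sym2.congr_right.1 h
  · intro u hu u' hu' hne
    rw [Function.onFun, Finset.disjoint_left]
    intro x hx hx'
    obtain ⟨a, ha, rfl⟩ := Finset.mem_image.1 hx
    obtain ⟨a', -, he⟩ := Finset.mem_image.1 hx'
    rcases Sym2.eq_iff.1 he with ⟨h, -⟩ | ⟨h, -⟩
    · exact hne h.symm
    · exact hU u' hu' (h ▸ hN u hu ha)

theorem freeNbrs_sdiff_offer_of_notMem (hN : ∀ u ∈ U, N u ⊆ A) (hw : w ∉ A) (hwU : w ∉ U) :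
    freeNbrs (F \ offer U N) A w = freeNbrs F A w :=
  Finset.filter_congr fun _ _ => by
    rw [Finset.mem_sdiff, mk_mem_offer_iff hN hw]
    tauto

theorem freeNbrs_sdiff_offer_freeNbrs (hw : w ∉ A) (hwU : w ∈ U) :
    freeNbrs (F \ offer U (freeNbrs F A)) A w = ∅ := by
  refine Finset.filter_eq_empty_iff.2 fun a ha haF => (Finset.mem_sdiff.1 haF).2 ?_
  rw [mk_mem_offer_iff (N := freeNbrs F A) (fun _ _ => Finset.filter_subset _ _) hw]
  exact ⟨hwU, Finset.mem_filter.2 ⟨ha, (Finset.mem_sdiff.1 haF).1⟩⟩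

end Offer

variable [Fintype V]

/-- The position with free edges `F` and Client's edges `C` realizes the abstract position
`(s, D)` of `CanGrow`. -/
def Realizes (F C : Finset (Sym2 V)) (s : ℕ) (D : Multiset ℕ) : Prop :=
  ∃ A v, IsCore F C A v ∧ A.card = s ∧
    D = (Finset.univ \ A).val.map fun u => (freeNbrs F A u).card

namespace IsCore

variable {F C O : Finset (Sym2 V)} {A : Finset V} {v u a : V}

theorem realizes_absorb (h : IsCore F C A v) (hO : ∀ u w, u ∉ A → w ∉ A → s(u, w) ∉ O)
    (hu : u ∉ A) (ha : a ∈ A) :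
    Realizes (F \ O) (insert s(u, a) C) (A.card + 1)
      (((Finset.univ \ A).val.erase u).map fun w => (freeNbrs (F \ O) A w).card + 1) := by
  refine ⟨insert u A, v, h.absorb hO hu ha, Finset.card_insert_of_notMem hu, ?_⟩
  rw [Finset.sdiff_insert, Finset.erase_val]
  refine Multiset.map_congr rfl fun w hw => (h.card_freeNbrs_insert hO hu ?_).symm
  rw [← Finset.erase_val, ← Finset.sdiff_insert, Finset.mem_val] at hw
  exact (Finset.mem_sdiff.1 hw).2

end IsCore

namespace Realizes

variable {q s : ℕ} {F C : Finset (Sym2 V)}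

theorem exists_offerAll {T R : Multiset ℕ} (h : Realizes F C s (T + R)) (hT : T.sum = q + 1) :
    ∃ O ⊆ F, O.card = q + 1 ∧ ∀ x ∈ O,
      Realizes (F \ O) (insert x C) (s + 1) (R.map (· + 1) + replicate (card T - 1) 1) := by
  obtain ⟨A, v, hcore, rfl, hD⟩ := h
  obtain ⟨tU, tW, hsplit, hU, hW⟩ := exists_eq_add_of_map_eq_add hD.symm
  have hnodup : (tU + tW).Nodup := hsplit ▸ (Finset.univ \ A).nodup
  set U : Finset V := ⟨tU, (nodup_add.1 hnodup).1⟩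
  have hout : ∀ w ∈ tU + tW, w ∉ A := fun w hw =>
    (Finset.mem_sdiff.1 (Finset.mem_def.2 (hsplit ▸ hw))).2
  have hUA : ∀ u ∈ U, u ∉ A := fun u hu => hout u (mem_add.2 (.inl hu))
  have hN : ∀ u ∈ U, freeNbrs F A u ⊆ A := fun _ _ => Finset.filter_subset _ _
  refine ⟨offer U (freeNbrs F A), offer_subset fun _ _ => subset_rfl, ?_, fun x hx => ?_⟩
  · rw [card_offer hUA hN, Finset.sum_eq_multiset_sum, ← hT, ← hU]
  obtain ⟨u, hu, a, ha, rfl⟩ := mem_offer.1 hx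
  convert hcore.realizes_absorb (fun _ _ => mk_notMem_offer hN) (hUA u hu)
    (Finset.mem_filter.1 ha).1 using 1
  have hoffered : (tU.erase u).map (fun w => (freeNbrs (F \ offer U (freeNbrs F A)) A w).card + 1)
      = replicate (card T - 1) 1 := by
    rw [map_congr rfl fun w hw => by
      rw [freeNbrs_sdiff_offer_freeNbrs (hUA w (mem_of_mem_erase hw)) (mem_of_mem_erase hw),
        Finset.card_empty], map_const', card_erase_of_mem hu, ← hU, card_map, Nat.pred_eq_sub_one]
  have hrest : tW.map (fun w => (freeNbrs (F \ offer U (freeNbrs F A)) A w).card + 1)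
      = R.map (· + 1) := by
    rw [← hW, Multiset.map_map]
    refine map_congr rfl fun w hw => ?_
    have hwU : w ∉ U := disjoint_left.1 (nodup_add.1 hnodup).2.2.symm hw
    rw [Function.comp_apply, freeNbrs_sdiff_offer_of_notMem hN (hout w (mem_add.2 (.inr hw))) hwU]
  rw [hsplit, erase_add_left_pos _ hu, Multiset.map_add, hoffered, hrest, add_comm]

theorem exists_offerOne {d : ℕ} {R : Multiset ℕ} (h : Realizes F C s (d ::ₘ R))
    (hd : q + 1 ≤ d) :
    ∃ O ⊆ F, O.card = q + 1 ∧ ∀ x ∈ O, Realizes (F \ O) (insert x C) (s + 1) (R.map (· + 1)) := by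
  obtain ⟨A, v, hcore, rfl, hD⟩ := h
  obtain ⟨u, hu, rfl, hR⟩ := (map_eq_cons _ _ _ _).2 hD.symm
  have huA : u ∉ A := (Finset.mem_sdiff.1 (Finset.mem_def.2 hu)).2
  obtain ⟨B, hB, hBcard⟩ := Finset.exists_subset_card_eq hd
  have hN : ∀ w ∈ ({u} : Finset V), B ⊆ A := fun _ _ => hB.trans (Finset.filter_subset _ _)
  refine ⟨offer {u} fun _ => B, offer_subset (A := A) fun w hw => ?_, ?_, fun x hx => ?_⟩
  · rwa [Finset.mem_singleton.1 hw]
  · rw [card_offer (by simpa using huA) hN, Finset.sum_singleton, hBcard]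
  obtain ⟨u', hu', a, ha, rfl⟩ := mem_offer.1 hx
  rw [Finset.mem_singleton] at hu'
  subst hu'
  convert hcore.realizes_absorb (fun _ _ => mk_notMem_offer hN) huA
    (hN u' (Finset.mem_singleton_self _) ha) using 1
  rw [← hR, Multiset.map_map]
  refine map_congr rfl fun w hw => ?_
  obtain ⟨hwu, hw⟩ := (Finset.univ \ A).nodup.mem_erase_iff.1 hw
  rw [Function.comp_apply, freeNbrs_sdiff_offer_of_notMem hN (Finset.mem_sdiff.1 hw).2
    (by simpa using hwu)]

end Realizes

theorem waiterCanForce_of_canGrow {q t s : ℕ} {D : Multiset ℕ} (hgrow : CanGrow q t s D)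
    {F C : Finset (Sym2 V)} (h : Realizes F C s D) :
    WaiterCanForce q (fun C => ∃ v, t ≤ ((clientGraph C).connectedComponentMk v).supp.ncard)
      F C := by
  induction hgrow generalizing F C with
  | done ht =>
    obtain ⟨A, v, hcore, rfl, -⟩ := h
    exact waiterCanForce_of_forall_superset F C fun C' hC' =>
      ⟨v, ht.trans (hcore.card_le_ncard_supp hC')⟩
  | offerAll T R hT _ ih =>
    obtain ⟨O, hOF, hO, hnext⟩ := h.exists_offerAll hT
    exact waiterCanForce_of_offer hOF hO fun x hx => ih (hnext x hx)
  | offerOne d R hd _ ih =>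
    obtain ⟨O, hOF, hO, hnext⟩ := h.exists_offerOne hd
    exact waiterCanForce_of_offer hOF hO fun x hx => ih (hnext x hx)

end Realization

theorem realizes_knBoard {n : ℕ} (v : Fin n) :
    Realizes (knBoard n) ∅ 1 (replicate (n - 1) 1) := by
  refine ⟨{v}, v, ⟨Finset.mem_singleton_self v, ?_, ?_⟩, Finset.card_singleton v, ?_⟩
  · intro a ha
    rw [Finset.mem_singleton.1 ha]
  · intro u w _ _ huw
    simp [knBoard, huw]
  · have hdeg : ∀ u ∈ (Finset.univ \ {v}).val, (freeNbrs (knBoard n) {v} u).card = 1 := by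
      intro u hu
      have huv : u ≠ v := Finset.notMem_singleton.1 (Finset.mem_sdiff.1 (Finset.mem_def.2 hu)).2
      simp [freeNbrs, knBoard, Finset.filter_singleton, huv]
    rw [map_congr rfl hdeg, map_const', Finset.card_val,
      Finset.card_sdiff_of_subset (Finset.subset_univ _), Finset.card_univ, Fintype.card_fin,
      Finset.card_singleton]

theorem statement9_general (n q : ℕ) (hn : 0 < n) :
    WaiterCanForce q
      (fun C : Finset (Sym2 (Fin n)) => ∃ v : Fin n,
        min (n : ℤ) (2 * ((n : ℤ) - (q : ℤ) - 1)) ≤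
          ((((clientGraph C).connectedComponentMk v).supp.ncard : ℤ)))
      (knBoard n) ∅ := by
  rcases le_or_gt n (q + 1) with hsmall | hbig
  · refine waiterCanForce_of_forall_superset _ _ fun _ _ => ⟨⟨0, hn⟩, ?_⟩
    exact (min_le_right _ _).trans (by omega)
  · obtain ⟨m, rfl⟩ : ∃ m, n = m + q + 1 := ⟨n - q - 1, by omega⟩
    have hgrow : CanGrow q (min (m + q + 1) (2 * m)) 1 (replicate (m + q + 1 - 1) 1) := by
      rw [show m + q + 1 - 1 = q + m by omega]
      exact CanGrow.initial (by omega) le_rfl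
    refine (waiterCanForce_of_canGrow hgrow (realizes_knBoard ⟨0, hn⟩)).mono ?_
    rintro C ⟨v, hv⟩
    exact ⟨v, by omega⟩

/-- For all positive integers `n` and `q`, in the `(q : 1)` Waiter-Client
game on `E(K_n)` Waiter has a strategy ensuring that Client's final graph contains a
connected component with at least `min {n, 2(n - q - 1)}` vertices. -/
theorem statement9 (n q : ℕ) (hn : 0 < n) (hq : 0 < q) :
    WaiterCanForce q
      (fun C : Finset (Sym2 (Fin n)) => ∃ v : Fin n,
        min (n : ℤ) (2 * ((n : ℤ) - (q : ℤ) - 1)) ≤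
          ((((clientGraph C).connectedComponentMk v).supp.ncard : ℤ)))
      (knBoard n) ∅ :=
  statement9_general n q hn
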